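/- Let n ≥ 7 and let i, j, k be integers with 2 ≤ i ≤ n-5, i+2 < j < n and j+1 < k ≤ n, and set z = (i-1, i)(j-1, k) ∈ S_n. Then s_{i-1}s_i⋯s_{j-1} is a reduced expression (of length j-i+1), and the strong right Bruhat walk of length j-i+1 whose t-th entry is z·s_is_{i+1}⋯s_{i+t-2} for 1 ≤ t ≤ j-i (so the first entry is z and the (j-i)-th entry is z·s_is_{i+1}⋯s_{j-2}) and whose last entry is z·s_is_{i+1}⋯s_{j-3}, is compatible with this reduced expression. -/

import Mathlib

/-- The longest element `w₀` of the symmetric group on `Fin n`,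
sending `t` to `n - 1 - t` (`0`-based), i.e. `t ↦ n + 1 - t` in `1`-based terms. -/
def w0 (n : ℕ) : Equiv.Perm (Fin n) :=
  ⟨Fin.rev, Fin.rev, fun x => Fin.rev_rev x, fun x => Fin.rev_rev x⟩

/-- The Coxeter length of a permutation: its number of inversions. -/
def len {n : ℕ} (x : Equiv.Perm (Fin n)) : ℕ :=
  (Finset.univ.filter fun ab : Fin n × Fin n => ab.1 < ab.2 ∧ x ab.2 < x ab.1).card

/-- The pattern `p ∈ S_m` consecutively appears in `x ∈ S_n` at (`1`-based) position `i`.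
Permutations of `{1, …, N}` are modelled (`0`-based) as permutations of `Fin N`. -/
def consecAppearsAt {m n : ℕ} (p : Equiv.Perm (Fin m)) (x : Equiv.Perm (Fin n)) (i : ℕ) :
    Prop :=
  ∃ h : 1 ≤ i ∧ i + m ≤ n + 1,
    ∀ a b : Fin m,
      p a < p b ↔
        x ⟨i - 1 + a.val, by have := a.isLt; omega⟩ <
          x ⟨i - 1 + b.val, by have := b.isLt; omega⟩

/-- `x` consecutively contains the pattern `p`. -/
def consecContains {m n : ℕ} (p : Equiv.Perm (Fin m)) (x : Equiv.Perm (Fin n)) : Prop :=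
  ∃ i : ℕ, consecAppearsAt p x i

/-- The pattern `2143 ∈ S₄` (`0`-based one-line notation: `1,0,3,2`). -/
def p2143 : Equiv.Perm (Fin 4) := Equiv.swap 0 1 * Equiv.swap 2 3

/-- The pattern `14325 ∈ S₅` (`0`-based one-line notation: `0,3,2,1,4`). -/
def p14325 : Equiv.Perm (Fin 5) := Equiv.swap 1 3

/-- The pattern `1536247 ∈ S₇` (`0`-based one-line notation: `0,4,2,5,1,3,6`). -/
def p1536247 : Equiv.Perm (Fin 7) := Equiv.swap 1 4 * Equiv.swap 3 5

/-- The pattern `1462537 ∈ S₇` (`0`-based one-line notation: `0,3,5,1,4,2,6`). -/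
def p1462537 : Equiv.Perm (Fin 7) := Equiv.swap 1 3 * Equiv.swap 2 5

/-- The pattern `1423 ∈ S₄` (`0`-based one-line notation: `0,3,1,2`). -/
def p1423 : Equiv.Perm (Fin 4) := Equiv.swap 1 2 * Equiv.swap 1 3

/-- The pattern `2314 ∈ S₄` (`0`-based one-line notation: `1,2,0,3`). -/
def p2314 : Equiv.Perm (Fin 4) := Equiv.swap 0 2 * Equiv.swap 0 1

/-- The simple transposition `s_t = (t, t+1)` (`1`-based) as a permutation of `Fin n`
(junk value `1` if `t` is out of range). -/
def simpleT (n t : ℕ) : Equiv.Perm (Fin n) :=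
  if h : 1 ≤ t ∧ t < n then Equiv.swap ⟨t - 1, by omega⟩ ⟨t, h.2⟩ else 1

/-- The product `s_a s_{a-1} ⋯ s_b` of simple transpositions with descending indices
(the identity if `b > a`). -/
def descProd (n a b : ℕ) : Equiv.Perm (Fin n) :=
  ((List.range (a + 1 - b)).map fun t => simpleT n (a - t)).prod

/-- The product `s_a s_{a+1} ⋯ s_b` of simple transpositions with ascending indices
(the identity if `b < a`). -/
def ascProd (n a b : ℕ) : Equiv.Perm (Fin n) :=
  ((List.range (b + 1 - a)).map fun t => simpleT n (a + t)).prod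

/-- `w s_b < w`, i.e. `s_b` is a right descent of `w`: `w(b) > w(b+1)` (`1`-based). -/
def rdes {n : ℕ} (w : Equiv.Perm (Fin n)) (b : ℕ) : Prop :=
  ∃ h : 1 ≤ b ∧ b < n, w ⟨b, h.2⟩ < w ⟨b - 1, by omega⟩

/-- `w s_b > w`, i.e. `s_b` is a right ascent of `w`: `w(b) < w(b+1)` (`1`-based). -/
def rasc {n : ℕ} (w : Equiv.Perm (Fin n)) (b : ℕ) : Prop :=
  ∃ h : 1 ≤ b ∧ b < n, w ⟨b - 1, by omega⟩ < w ⟨b, h.2⟩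

/-- `(W 1, …, W l)` is a strong right Bruhat walk: consecutive entries differ by right
multiplication by a simple transposition. -/
def isWalk {n : ℕ} (l : ℕ) (W : ℕ → Equiv.Perm (Fin n)) : Prop :=
  ∀ t : ℕ, 1 ≤ t → t + 1 ≤ l → ∃ b : ℕ, 1 ≤ b ∧ b < n ∧ W (t + 1) = W t * simpleT n b

/-- The walk `(W 1, …, W l)` is compatible with the reduced expression
`s_{ι 1} s_{ι 2} ⋯ s_{ι l}`. -/
def compat {n : ℕ} (l : ℕ) (ι : ℕ → ℕ) (W : ℕ → Equiv.Perm (Fin n)) : Prop :=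
  ∀ t : ℕ, 1 ≤ t → t ≤ l →
    rdes (W t) (ι t) ∧
    (2 ≤ t → rasc (W t) (ι (t - 1))) ∧
    (t + 1 ≤ l → rasc (W t) (ι (t + 1)))

/-- Membership in `X_{m,n}^i`: the one-line values at positions `i, i+1, …, i+m-1`
(`1`-based) are increasing. -/
def windowIncr {n : ℕ} (m i : ℕ) (x : Equiv.Perm (Fin n)) : Prop :=
  ∀ a b : Fin n, i - 1 ≤ a.val → a < b → b.val < i - 1 + m → x a < x b

/-- The order-preserving identification of `Fin m` with the window
`{o, o+1, …, o+m-1}` inside `Fin n`. -/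
def shiftEquiv (o m n : ℕ) (h : o + m ≤ n) :
    Fin m ≃ {x : Fin n // o ≤ x.val ∧ x.val < o + m} where
  toFun a := ⟨⟨o + a.val, by have := a.isLt; omega⟩, by
    refine ⟨Nat.le_add_right _ _, ?_⟩
    show o + a.val < o + m
    have := a.isLt; omega⟩
  invFun x := ⟨x.val.val - o, by have := x.prop; omega⟩
  left_inv a := by
    apply Fin.ext
    show o + a.val - o = a.val
    omega
  right_inv x := by
    apply Subtype.ext
    apply Fin.ext
    show o + (x.val.val - o) = x.val.val
    have := x.prop
    omega

/-- The shift `F_{m,n}^i : S_m → S_n`, sending `i+a-1 ↦ i+p(a)-1` (`1`-based) and fixing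
all other points. -/
def shiftPerm (m n i : ℕ) (h : i - 1 + m ≤ n) (p : Equiv.Perm (Fin m)) :
    Equiv.Perm (Fin n) :=
  Equiv.Perm.extendDomain p (shiftEquiv (i - 1) m n h)

/-!
In one-line notation `z = 1 ⋯ (i-2) i (i-1) (i+1) ⋯ (j-2) k j ⋯`; right multiplication by
`s_i s_{i+1} ⋯ s_e` carries the small entry `i-1` from position `i` to position `e+1`, shifting
the entries in between one place to the left. At step `t` of the walk that entry sits at position
`i+t-1`, between two larger entries, while the shifted entries to its left are still increasing:
this gives the descent `s_{i+t-2}` and the ascents `s_{i+t-3}`, `s_{i+t-1}`. The last step undoes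
the previous one, and there the pair `k, j` at positions `j-1, j` supplies the descent `s_{j-1}`.
The length of the cycle `s_{i-1} ⋯ s_{j-1}` is its number of inversions, all of which involve
its last position.
-/

open Equiv

lemma Fin.val_swap_apply {n : ℕ} (a b x : Fin n) :
    (swap a b x).val = if x.val = a.val then b.val else if x.val = b.val then a.val else x.val := by
  simp only [swap_apply_def, ← Fin.val_inj]
  split_ifs <;> rfl

lemma simpleT_mul_self (n b : ℕ) : simpleT n b * simpleT n b = 1 := by
  unfold simpleT
  split_ifs
  · exact swap_mul_self _ _
  · exact one_mul 1

lemma simpleT_apply_val {n b : ℕ} (h1 : 1 ≤ b) (h2 : b < n) (x : Fin n) :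
    (simpleT n b x).val = if x.val = b - 1 then b else if x.val = b then b - 1 else x.val := by
  rw [simpleT, dif_pos ⟨h1, h2⟩, Fin.val_swap_apply]

lemma ascProd_of_lt {n a b : ℕ} (h : b < a) : ascProd n a b = 1 := by
  rw [ascProd, Nat.sub_eq_zero_of_le h, List.range_zero, List.map_nil, List.prod_nil]

lemma ascProd_succ {n a b : ℕ} (h : a ≤ b + 1) :
    ascProd n a (b + 1) = ascProd n a b * simpleT n (b + 1) := by
  rw [ascProd, ascProd, show b + 1 + 1 - a = (b + 1 - a) + 1 by omega, List.range_succ,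
    List.map_append, List.prod_append]
  simp [show a + (b + 1 - a) = b + 1 by omega]

lemma ascProd_succ_mul_simpleT {n a b : ℕ} (h : a ≤ b + 1) :
    ascProd n a (b + 1) * simpleT n (b + 1) = ascProd n a b := by
  rw [ascProd_succ h, mul_assoc, simpleT_mul_self, mul_one]

lemma ascProd_apply_val {n a b : ℕ} (ha : 1 ≤ a) (hb : b < n) (hab : a ≤ b + 1) (x : Fin n) :
    (ascProd n a b x).val =
      if a - 1 ≤ x.val ∧ x.val < b then x.val + 1 else if x.val = b then a - 1 else x.val := by
  induction b generalizing x with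
  | zero =>
    rw [ascProd_of_lt (show 0 < a by omega), Perm.one_apply]
    split_ifs <;> omega
  | succ b ih =>
    have := x.isLt
    rcases Nat.lt_or_ge (b + 1) a with h | h
    · rw [ascProd_of_lt h, Perm.one_apply]
      split_ifs <;> omega
    · rw [ascProd_succ h, Perm.mul_apply, ih (by omega) h, simpleT_apply_val (by omega) hb]
      split_ifs <;> omega

lemma len_ascProd {n a b : ℕ} (ha : 1 ≤ a) (hb : b < n) (hab : a ≤ b + 1) :
    len (ascProd n a b) = b + 1 - a := by
  have hinv : (Finset.univ.filter fun xy : Fin n × Fin n =>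
        xy.1 < xy.2 ∧ ascProd n a b xy.2 < ascProd n a b xy.1) =
      (Finset.Ico (⟨a - 1, by omega⟩ : Fin n) ⟨b, hb⟩).image (fun x => (x, ⟨b, hb⟩)) := by
    ext ⟨x, y⟩
    simp only [Finset.mem_filter, Finset.mem_univ, true_and, Finset.mem_image, Finset.mem_Ico,
      Fin.lt_def, Fin.le_def, Prod.mk.injEq, ← Fin.val_inj, ascProd_apply_val ha hb hab]
    constructor
    · rintro ⟨hxy, hyx⟩
      refine ⟨x, ⟨?_, ?_⟩, rfl, ?_⟩ <;> split_ifs at hyx <;> omega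
    · rintro ⟨x', ⟨hx1, hx2⟩, hx, hy⟩
      split_ifs <;> omega
  rw [len, hinv, Finset.card_image_of_injective _ (fun x y h => (Prod.ext_iff.mp h).1),
    Fin.card_Ico]
  show b - (a - 1) = b + 1 - a
  omega

lemma rdes_of_val_lt {n b : ℕ} {w : Perm (Fin n)} (h1 : 1 ≤ b) (h2 : b < n)
    (h : (w ⟨b, h2⟩).val < (w ⟨b - 1, by omega⟩).val) : rdes w b :=
  ⟨⟨h1, h2⟩, h⟩

lemma rasc_of_val_lt {n b : ℕ} {w : Perm (Fin n)} (h1 : 1 ≤ b) (h2 : b < n)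
    (h : (w ⟨b - 1, by omega⟩).val < (w ⟨b, h2⟩).val) : rasc w b :=
  ⟨⟨h1, h2⟩, h⟩

lemma isWalk_mul_ascProd {n i j : ℕ} (z : Perm (Fin n)) (hi : 2 ≤ i) (hij : i + 2 < j)
    (hj : j < n) :
    isWalk (j - i + 1)
      (fun t => z * (if t ≤ j - i then ascProd n i (i + t - 2) else ascProd n i (j - 3))) := by
  intro t ht htl
  dsimp only
  rcases Nat.lt_or_ge t (j - i) with h | h
  · refine ⟨i + t - 1, by omega, by omega, ?_⟩
    rw [if_pos (show t + 1 ≤ j - i by omega), if_pos h.le, mul_assoc,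
      show i + (t + 1) - 2 = i + t - 2 + 1 by omega, ascProd_succ (by omega),
      show i + t - 2 + 1 = i + t - 1 by omega]
  · obtain rfl : t = j - i := by omega
    refine ⟨j - 2, by omega, by omega, ?_⟩
    rw [if_neg (by omega), if_pos le_rfl, mul_assoc,
      show i + (j - i) - 2 = j - 3 + 1 by omega, show j - 2 = j - 3 + 1 by omega,
      ascProd_succ_mul_simpleT (by omega)]

/-- The `0`-based one-line notation of `(i-1, i)(j-1, k)`. -/
def swapsVal (i j k x : ℕ) : ℕ :=
  if x = i - 2 then i - 1 else if x = i - 1 then i - 2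
  else if x = j - 2 then k - 1 else if x = k - 1 then j - 2 else x

section BubbleWalk

variable {n i j k : ℕ} {z : Perm (Fin n)}

lemma rdes_and_rasc_mul_ascProd (hi : 2 ≤ i) (hjk : j + 1 < k) (hk : k ≤ n)
    (hz : ∀ x : Fin n, (z x).val = swapsVal i j k x.val)
    {e : ℕ} (he : i - 1 ≤ e) (hej : e ≤ j - 2) :
    rdes (z * ascProd n i e) e ∧ (i ≤ e → rasc (z * ascProd n i e) (e - 1)) ∧
      rasc (z * ascProd n i e) (e + 1) := by
  have hc := ascProd_apply_val (n := n) (a := i) (b := e) (by omega) (by omega) (by omega)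
  refine ⟨rdes_of_val_lt (by omega) (by omega) ?_,
    fun hie => rasc_of_val_lt (by omega) (by omega) ?_, rasc_of_val_lt (by omega) (by omega) ?_⟩ <;>
  -- deciding the conditions with `omega` inside `simp` evaluates the inner `if`s first, which
  -- keeps the final case split small
  · simp (disch := omega) only [Perm.mul_apply, hz, swapsVal, hc, if_pos, if_neg, ↓reduceIte]
    split_ifs <;> omega

lemma rdes_and_rasc_mul_ascProd_last (hi : 2 ≤ i) (hij : i + 2 < j) (hjk : j + 1 < k) (hk : k ≤ n)
    (hz : ∀ x : Fin n, (z x).val = swapsVal i j k x.val) :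
    rdes (z * ascProd n i (j - 3)) (j - 1) ∧ rasc (z * ascProd n i (j - 3)) (j - 2) := by
  have hc := ascProd_apply_val (n := n) (a := i) (b := j - 3) (by omega) (by omega) (by omega)
  refine ⟨rdes_of_val_lt (by omega) (by omega) ?_, rasc_of_val_lt (by omega) (by omega) ?_⟩ <;>
  · simp (disch := omega) only [Perm.mul_apply, hz, swapsVal, hc, if_pos, if_neg, ↓reduceIte]
    omega

lemma compat_mul_ascProd (hi : 2 ≤ i) (hij : i + 2 < j) (hjk : j + 1 < k) (hk : k ≤ n)
    (hz : ∀ x : Fin n, (z x).val = swapsVal i j k x.val) :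
    compat (j - i + 1) (fun t => i + t - 2)
      (fun t => z * (if t ≤ j - i then ascProd n i (i + t - 2) else ascProd n i (j - 3))) := by
  intro t ht htl
  dsimp only
  rcases Nat.lt_or_ge (j - i) t with h | h
  · obtain rfl : t = j - i + 1 := by omega
    obtain ⟨hdes, hasc⟩ := rdes_and_rasc_mul_ascProd_last hi hij hjk hk hz
    rw [if_neg (by omega)]
    refine ⟨?_, fun _ => ?_, fun _ => by omega⟩
    · rwa [show i + (j - i + 1) - 2 = j - 1 by omega]
    · rwa [show i + (j - i + 1 - 1) - 2 = j - 2 by omega]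
  · obtain ⟨hdes, hasc₁, hasc₂⟩ :=
      rdes_and_rasc_mul_ascProd (e := i + t - 2) hi hjk hk hz (by omega) (by omega)
    rw [if_pos h]
    refine ⟨hdes, fun _ => ?_, fun _ => ?_⟩
    · rw [show i + (t - 1) - 2 = i + t - 2 - 1 by omega]
      exact hasc₁ (by omega)
    · rwa [show i + (t + 1) - 2 = i + t - 2 + 1 by omega]

end BubbleWalk

theorem stmt14 (n i j k : ℕ) (hi : 2 ≤ i)
    (hij : i + 2 < j) (hj : j < n) (hjk : j + 1 < k) (hk : k ≤ n)
    (z : Equiv.Perm (Fin n))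
    (hz : z = Equiv.swap ⟨i - 2, by omega⟩ ⟨i - 1, by omega⟩ *
              Equiv.swap ⟨j - 2, by omega⟩ ⟨k - 1, by omega⟩) :
    len (ascProd n (i - 1) (j - 1)) = j - i + 1 ∧
    isWalk (j - i + 1)
      (fun t => z * (if t ≤ j - i then ascProd n i (i + t - 2) else ascProd n i (j - 3))) ∧
    compat (j - i + 1) (fun t => i + t - 2)
      (fun t => z * (if t ≤ j - i then ascProd n i (i + t - 2) else ascProd n i (j - 3))) := by
  have hzv : ∀ x : Fin n, (z x).val = swapsVal i j k x.val := fun x => by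
    rw [hz, Perm.mul_apply, Fin.val_swap_apply, Fin.val_swap_apply, swapsVal]
    dsimp only
    split_ifs <;> omega
  exact ⟨by rw [len_ascProd (by omega) (by omega) (by omega)]; omega,
    isWalk_mul_ascProd z hi hij hj, compat_mul_ascProd hi hij hjk hk hzv⟩
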